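/- For every context-free grammar G in Chomsky normal form with terminals Γ, the Kopczyński obfuscation kop(G) is a regular tree language over the ranked alphabet Γ ∪ {a,c} (terminals having arity 0, a arity 2, c arity 0). -/

import Mathlib

inductive Term (σ : Type) : Type
  | port : Term σ
  | node : σ → List (Term σ) → Term σ

namespace Term

variable {σ : Type}

def ports : Term σ → ℕ
  | .port => 1
  | .node _ ts => (ts.attach.map fun x => ports x.1).sum
decreasing_by
  simp_wf
  have := List.sizeOf_lt_of_mem x.2
  omega

def size : Term σ → ℕ
  | .port => 1
  | .node _ ts => 1 + (ts.attach.map fun x => size x.1).sum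
decreasing_by
  simp_wf
  have := List.sizeOf_lt_of_mem x.2
  omega

def WF (ar : σ → ℕ) : Term σ → Prop
  | .port => True
  | .node a ts => ts.length = ar a ∧ ∀ t ∈ ts.attach, WF ar t.1
decreasing_by
  simp_wf
  have := List.sizeOf_lt_of_mem t.2
  omega

mutual
def subst1 : Term σ → List (Term σ) → Term σ × List (Term σ)
  | .port, l => (l.headD .port, l.tail)
  | .node a ts, l => let p := substL ts l; (.node a p.1, p.2)
def substL : List (Term σ) → List (Term σ) → List (Term σ) × List (Term σ)
  | [], l => ([], l)
  | t :: ts, l => let p := subst1 t l; let q := substL ts p.2; (p.1 :: q.1, q.2)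
end

/-- Substitute the terms `l` for the ports of `t`, in left-to-right order. -/
def subst (t : Term σ) (l : List (Term σ)) : Term σ := (subst1 t l).1

def eval {Q : Type} (δ : σ → List Q → Q) (q0 : Q) : Term σ → Q
  | .port => q0
  | .node a ts => δ a (ts.attach.map fun x => eval δ q0 x.1)
decreasing_by
  simp_wf
  have := List.sizeOf_lt_of_mem x.2
  omega

end Term

inductive TStar {σ : Type} (t : Term σ) : Term σ → Prop
  | base : TStar t Term.port
  | step {u v : Term σ} : TStar t u → TStar t v → TStar t (t.subst [u, v])

def LEquiv {σ : Type} (ar : σ → ℕ) (L : Set (Term σ)) (n : ℕ) (u u' : Term σ) : Prop :=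
  u.ports = n ∧ u'.ports = n ∧
  ∀ s : Term σ, s.ports = 1 → s.WF ar →
    ∀ l : List (Term σ), l.length = n → (∀ x ∈ l, x.ports = 0 ∧ x.WF ar) →
      (s.subst [u.subst l] ∈ L ↔ s.subst [u'.subst l] ∈ L)

def RegularTree {σ : Type} (ar : σ → ℕ) (L : Set (Term σ)) : Prop :=
  ∃ (Q : Type) (_ : Finite Q) (δ : σ → List Q → Q) (q0 : Q) (F : Set Q),
    L = {u | u.ports = 0 ∧ u.WF ar ∧ u.eval δ q0 ∈ F}

def RegularWord {Γ : Type} (K : Set (List Γ)) : Prop :=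
  ∃ (Q : Type) (_ : Fintype Q) (M : DFA Γ Q), K = M.accepts

/-- A context-free grammar in Chomsky normal form: rules `A → B C` and `A → σ`. -/
structure CNF (Γ N : Type) where
  start : N
  rule2 : N → N → N → Prop
  rule1 : N → Γ → Prop

/-- Derivation trees: internal nodes labeled by nonterminals, leaves by terminals. -/
inductive DTree (Γ N : Type) : Type
  | leaf : Γ → DTree Γ N
  | node : N → DTree Γ N → DTree Γ N → DTree Γ N

def DTree.yield {Γ N : Type} : DTree Γ N → List Γ
  | .leaf a => [a]
  | .node _ l r => l.yield ++ r.yield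

/-- `IsDeriv G d A`: `d` is a derivation tree of `G` from nonterminal `A`. -/
def IsDeriv {Γ N : Type} (G : CNF Γ N) : DTree Γ N → N → Prop
  | .leaf a, A => G.rule1 A a
  | .node B l r, A => B = A ∧ ∃ C D, G.rule2 A C D ∧ IsDeriv G l C ∧ IsDeriv G r D

/-- The word language generated by `G`. -/
def CNF.lang {Γ N : Type} (G : CNF Γ N) : Set (List Γ) :=
  {w | ∃ d : DTree Γ N, IsDeriv G d G.start ∧ d.yield = w}

/-- The ranked alphabet `Γ ∪ {a, c}`: `Sum.inr true` is the binary letter `a`,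
`Sum.inr false` is the nullary letter `c`, and letters of `Γ` have arity 0. -/
abbrev KLetter (Γ : Type) := Γ ⊕ Bool

def arK {Γ : Type} : KLetter Γ → ℕ
  | .inr true => 2
  | _ => 0

/-- All labels of the term are among `{a, c}`. -/
def OnlyAC {Γ : Type} : Term (KLetter Γ) → Prop
  | .port => True
  | .node x ts => (∃ b : Bool, x = .inr b) ∧ ∀ u ∈ ts.attach, OnlyAC u.1
decreasing_by
  simp_wf
  have := List.sizeOf_lt_of_mem u.2
  omega

def leafT {Γ : Type} (g : Γ) : Term (KLetter Γ) := .node (.inl g) []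

/-- `KopD d u`: `u` is obtained from the derivation tree `d` by replacing each
nonterminal occurrence by some 2-ary term over `{a, c}`. -/
inductive KopD {Γ N : Type} : DTree Γ N → Term (KLetter Γ) → Prop
  | leaf (g : Γ) : KopD (.leaf g) (leafT g)
  | node (A : N) (l r : DTree Γ N) (s u v : Term (KLetter Γ)) :
      s.ports = 2 → s.WF arK → OnlyAC s → KopD l u → KopD r v →
      KopD (.node A l r) (s.subst [u, v])

/-- The Kopczyński obfuscation of `G`. -/
def kopLang {Γ N : Type} (G : CNF Γ N) : Set (Term (KLetter Γ)) :=
  {u | ∃ d : DTree Γ N, IsDeriv G d G.start ∧ KopD d u}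

/-- The left-to-right word of `Γ`-labeled leaves of a tree over `Γ ∪ {a,c}`. -/
def gyield {Γ : Type} : Term (KLetter Γ) → List Γ
  | .port => []
  | .node (.inl g) _ => [g]
  | .node (.inr _) ts => (ts.attach.map fun x => gyield x.1).flatten
decreasing_by
  simp_wf
  have := List.sizeOf_lt_of_mem x.2
  omega

/-!
A tree lies in kop(G) from `A` iff it is a leaf `σ` with `A → σ`, or `s[u, v]` for an
`{a, c}`-context `s` with two ports and obfuscations `u`, `v` from `C`, `D` with `A → C D`.
Record for each tree `t` the facts "`t` is an obfuscation from `A`" and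
"`t = s[u₁, …, uₙ]` with `s` an `{a, c}`-context and `uᵢ` obfuscations from `Aᵢ`", for `n ≤ 2`.
Splitting the context at the root shows that the facts true of `a(t₁, t₂)` depend only on
those true of `t₁` and `t₂`. So these finitely many facts form a congruence of finite index,
and kop(G) is a union of its classes.
-/

namespace Term

variable {σ : Type}

theorem induction {P : Term σ → Prop} (port : P .port)
    (node : ∀ a ts, (∀ t ∈ ts, P t) → P (.node a ts)) : ∀ t, P t
  | .port => port
  | .node a ts =>
    node a ts fun t ht => have := List.sizeOf_lt_of_mem ht; induction port node t
termination_by t => sizeOf t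
decreasing_by simp_wf; omega

@[simp] theorem ports_port : (port : Term σ).ports = 1 := by
  rw [ports]

@[simp] theorem ports_node (a : σ) (ts : List (Term σ)) :
    (node a ts).ports = (ts.map ports).sum := by
  rw [ports, List.attach_map_val]

@[simp] theorem wf_node (ar : σ → ℕ) (a : σ) (ts : List (Term σ)) :
    (node a ts).WF ar ↔ ts.length = ar a ∧ ∀ t ∈ ts, t.WF ar := by
  rw [WF]
  exact and_congr_right fun _ =>
    ⟨fun h t ht => h ⟨t, ht⟩ (List.mem_attach _ _), fun h t _ => h t.1 t.2⟩

@[simp] theorem eval_node {Q : Type} (δ : σ → List Q → Q) (q0 : Q) (a : σ) (ts : List (Term σ)) :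
    (node a ts).eval δ q0 = δ a (ts.map (eval δ q0)) := by
  rw [eval, List.attach_map_val]

theorem subst1_append : ∀ (t : Term σ) (l₁ l₂ : List (Term σ)), l₁.length = t.ports →
    subst1 t (l₁ ++ l₂) = ((subst1 t l₁).1, l₂) := by
  intro t
  induction t using Term.induction with
  | port =>
    intro l₁ l₂ h
    obtain ⟨u, rfl⟩ := List.length_eq_one_iff.mp (by simpa using h)
    simp [subst1]
  | node a ts ih =>
    suffices ∀ l₁ l₂ : List (Term σ), l₁.length = (ts.map ports).sum →
        substL ts (l₁ ++ l₂) = ((substL ts l₁).1, l₂) by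
      intro l₁ l₂ h
      simp [subst1, this l₁ l₂ (by simpa using h)]
    induction ts with
    | nil =>
      intro l₁ l₂ h
      simp_all [substL]
    | cons t ts ihts =>
      intro l₁ l₂ h
      simp only [List.map_cons, List.sum_cons] at h
      obtain ⟨m₁, m₂, rfl, hm₁, hm₂⟩ : ∃ m₁ m₂, l₁ = m₁ ++ m₂ ∧ m₁.length = t.ports ∧
          m₂.length = (ts.map ports).sum :=
        ⟨l₁.take t.ports, l₁.drop t.ports, by simp, by simp; omega, by simp; omega⟩
      have ihts := ihts (fun u hu => ih u (List.mem_cons_of_mem _ hu))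
      simp [substL, ih t List.mem_cons_self _ _ hm₁, ihts _ _ hm₂]

theorem subst_port_cons (u : Term σ) (l : List (Term σ)) : port.subst (u :: l) = u := by
  simp [subst, subst1]

theorem subst_node_nil (a : σ) (l : List (Term σ)) : (node a []).subst l = node a [] := by
  simp [subst, subst1, substL]

theorem subst_node_pair (a : σ) (s₁ s₂ : Term σ) {l₁ : List (Term σ)} (l₂ : List (Term σ))
    (h : l₁.length = s₁.ports) :
    (node a [s₁, s₂]).subst (l₁ ++ l₂) = node a [s₁.subst l₁, s₂.subst l₂] := by
  simp [subst, subst1, substL, subst1_append s₁ l₁ l₂ h]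

end Term

open Term

theorem RegularTree.of_congr {σ Q : Type} [Finite Q] (ar : σ → ℕ) (τ : Term σ → Q) (F : Set Q)
    (hτ : ∀ a ts ts', (node a ts).WF ar → (node a ts').WF ar → ts.map τ = ts'.map τ →
      τ (node a ts) = τ (node a ts')) :
    RegularTree ar {u | u.ports = 0 ∧ u.WF ar ∧ τ u ∈ F} := by
  classical
  -- `δ` applies `τ` to any well-formed node whose children have values `qs`; by `hτ` the
  -- choice of node does not matter.
  let δ : σ → List Q → Q := fun a qs =>
    if h : ∃ ts, (node a ts).WF ar ∧ ts.map τ = qs then τ (node a h.choose) else τ .port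
  have heval : ∀ t : Term σ, t.WF ar → t.eval δ (τ .port) = τ t := by
    intro t
    induction t using Term.induction with
    | port => intro _; rw [eval]
    | node a ts ih =>
      intro hw
      have hmap : ts.map (eval δ (τ .port)) = ts.map τ :=
        List.map_congr_left fun t ht => ih t ht (((wf_node ar a ts).1 hw).2 t ht)
      have hex : ∃ ts', (node a ts').WF ar ∧ ts'.map τ = ts.map τ := ⟨ts, hw, rfl⟩
      rw [eval_node, hmap]
      simp only [δ, dif_pos hex]
      exact hτ a _ ts hex.choose_spec.1 hw hex.choose_spec.2
  exact ⟨Q, inferInstance, δ, τ .port, F, Set.ext fun u =>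
    and_congr_right fun _ => and_congr_right fun hw => by rw [heval u hw]⟩

section Obfuscation

variable {Γ N : Type}

def aNode (t₁ t₂ : Term (KLetter Γ)) : Term (KLetter Γ) := .node (.inr true) [t₁, t₂]

def cLeaf : Term (KLetter Γ) := .node (.inr false) []

@[simp] theorem ports_aNode (t₁ t₂ : Term (KLetter Γ)) :
    (aNode t₁ t₂).ports = t₁.ports + t₂.ports := by
  simp [aNode]

@[simp] theorem onlyAC_node (x : KLetter Γ) (ts : List (Term (KLetter Γ))) :
    OnlyAC (.node x ts) ↔ (∃ b : Bool, x = .inr b) ∧ ∀ t ∈ ts, OnlyAC t := by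
  rw [OnlyAC]
  exact and_congr_right fun _ =>
    ⟨fun h t ht => h ⟨t, ht⟩ (List.mem_attach _ _), fun h t _ => h t.1 t.2⟩

inductive IsACContext : Term (KLetter Γ) → Prop
  | port : IsACContext .port
  | c : IsACContext cLeaf
  | a {s₁ s₂} : IsACContext s₁ → IsACContext s₂ → IsACContext (aNode s₁ s₂)

theorem isACContext_iff {s : Term (KLetter Γ)} : IsACContext s ↔ OnlyAC s ∧ s.WF arK := by
  constructor
  · intro hs
    induction hs with
    | port => simp [OnlyAC, WF]
    | c => simp [cLeaf, arK]
    | a _ _ ih₁ ih₂ => simp_all [aNode, arK]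
  · induction s using Term.induction with
    | port => exact fun _ => .port
    | node x ts ih =>
      rw [onlyAC_node, wf_node]
      rintro ⟨⟨⟨b, rfl⟩, hac⟩, hlen, hwf⟩
      cases b with
      | false =>
        obtain rfl : ts = [] := List.length_eq_zero_iff.1 hlen
        exact .c
      | true =>
        obtain ⟨t₁, t₂, rfl⟩ := List.length_eq_two.1 hlen
        simp only [List.mem_cons, List.not_mem_nil, or_false, forall_eq_or_imp, forall_eq]
          at ih hac hwf
        exact .a (ih.1 ⟨hac.1, hwf.1⟩) (ih.2 ⟨hac.2, hwf.2⟩)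

theorem IsACContext.subst_ground {s : Term (KLetter Γ)} (hs : IsACContext s)
    {us : List (Term (KLetter Γ))} (hlen : us.length = s.ports)
    (hus : ∀ u ∈ us, u.ports = 0 ∧ u.WF arK) : (s.subst us).ports = 0 ∧ (s.subst us).WF arK := by
  induction hs generalizing us with
  | port =>
    obtain ⟨u, rfl⟩ := List.length_eq_one_iff.1 (by simpa using hlen)
    simpa [subst_port_cons] using hus
  | c => simp [cLeaf, subst_node_nil, arK]
  | @a s₁ s₂ _ _ ih₁ ih₂ =>
    rw [ports_aNode] at hlen
    rw [← List.take_append_drop s₁.ports us, aNode, subst_node_pair _ _ _ _ (by simp; omega)]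
    have h₁ := ih₁ (us := us.take s₁.ports) (by simp; omega)
      fun u hu => hus u (List.mem_of_mem_take hu)
    have h₂ := ih₂ (us := us.drop s₁.ports) (by simp; omega)
      fun u hu => hus u (List.mem_of_mem_drop hu)
    simp [h₁, h₂, arK]

theorem KopD.ground {d : DTree Γ N} {u : Term (KLetter Γ)} (h : KopD d u) :
    u.ports = 0 ∧ u.WF arK := by
  induction h with
  | leaf g => simp [leafT, arK]
  | node _ _ _ s u v hs hwf hac _ _ ihu ihv =>
    exact (isACContext_iff.2 ⟨hac, hwf⟩).subst_ground (by simp [hs]) (by simp [ihu, ihv])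

variable (G : CNF Γ N)

def KopFrom (A : N) (u : Term (KLetter Γ)) : Prop :=
  ∃ d, IsDeriv G d A ∧ KopD d u

def KopFill (l : List N) (t : Term (KLetter Γ)) : Prop :=
  ∃ s us, IsACContext s ∧ s.ports = l.length ∧ List.Forall₂ (KopFrom G) l us ∧ t = s.subst us

def KopSplit (l : List N) (t₁ t₂ : Term (KLetter Γ)) : Prop :=
  ∃ l₁ l₂, l = l₁ ++ l₂ ∧ KopFill G l₁ t₁ ∧ KopFill G l₂ t₂

theorem kopFrom_iff {A : N} {t : Term (KLetter Γ)} :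
    KopFrom G A t ↔
      (∃ g, G.rule1 A g ∧ t = leafT g) ∨ ∃ C D, G.rule2 A C D ∧ KopFill G [C, D] t := by
  constructor
  · rintro ⟨d, hd, hk⟩
    cases hk with
    | leaf g => exact .inl ⟨g, hd, rfl⟩
    | node _ l r s u v hs hwf hac hl hr =>
      obtain ⟨-, C, D, hCD, hlC, hrD⟩ := hd
      exact .inr ⟨C, D, hCD, s, [u, v], isACContext_iff.2 ⟨hac, hwf⟩, by simp [hs],
        .cons ⟨l, hlC, hl⟩ (.cons ⟨r, hrD, hr⟩ .nil), rfl⟩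
  · rintro (⟨g, hg, rfl⟩ | ⟨C, D, hCD, s, us, hs, hp, hus, rfl⟩)
    · exact ⟨.leaf g, hg, .leaf g⟩
    · rcases hus with _ | ⟨⟨l, hl, hkl⟩, _ | ⟨⟨r, hr, hkr⟩, _ | _⟩⟩
      obtain ⟨hac, hwf⟩ := isACContext_iff.1 hs
      exact ⟨.node A l r, ⟨rfl, C, D, hCD, hl, hr⟩, .node A l r s _ _ hp hwf hac hkl hkr⟩

theorem kopFill_aNode_iff {l : List N} {t₁ t₂ : Term (KLetter Γ)} :
    KopFill G l (aNode t₁ t₂) ↔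
      (∃ A, l = [A] ∧ KopFrom G A (aNode t₁ t₂)) ∨ KopSplit G l t₁ t₂ := by
  constructor
  · rintro ⟨s, us, hs, hp, hus, e⟩
    cases hs with
    | port =>
      obtain ⟨A, rfl⟩ := List.length_eq_one_iff.1 (by simpa using hp.symm)
      rcases hus with _ | ⟨hu, _ | _⟩
      exact .inl ⟨A, rfl, by rwa [e, subst_port_cons]⟩
    | c => simp [cLeaf, aNode, subst_node_nil] at e
    | @a s₁ s₂ h₁ h₂ =>
      rw [ports_aNode] at hp
      have hlen := hus.length_eq
      rw [← List.take_append_drop s₁.ports us, aNode, aNode,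
        subst_node_pair _ _ _ _ (by simp; omega)] at e
      simp only [node.injEq, List.cons.injEq, and_true, true_and] at e
      obtain ⟨rfl, rfl⟩ := e
      exact .inr ⟨l.take s₁.ports, l.drop s₁.ports, (List.take_append_drop _ _).symm,
        ⟨s₁, _, h₁, by simp; omega, List.forall₂_take _ hus, rfl⟩,
        ⟨s₂, _, h₂, by simp; omega, List.forall₂_drop _ hus, rfl⟩⟩
  · rintro (⟨A, rfl, hA⟩ |
      ⟨l₁, l₂, rfl, ⟨s₁, us₁, hs₁, hp₁, hus₁, rfl⟩, ⟨s₂, us₂, hs₂, hp₂, hus₂, rfl⟩⟩)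
    · exact ⟨.port, [aNode t₁ t₂], .port, by simp, .cons hA .nil, by rw [subst_port_cons]⟩
    · exact ⟨aNode s₁ s₂, us₁ ++ us₂, .a hs₁ hs₂, by simp [hp₁, hp₂], List.rel_append hus₁ hus₂,
        (subst_node_pair _ _ _ _ (by rw [← hus₁.length_eq, hp₁])).symm⟩

theorem kopFrom_aNode_iff {A : N} {t₁ t₂ : Term (KLetter Γ)} :
    KopFrom G A (aNode t₁ t₂) ↔ ∃ C D, G.rule2 A C D ∧ KopSplit G [C, D] t₁ t₂ := by
  have hleaf : ∀ g, aNode t₁ t₂ ≠ leafT g := by simp [aNode, leafT]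
  rw [kopFrom_iff]
  simp only [kopFill_aNode_iff]
  simp [hleaf]

end Obfuscation

section Shapes

variable {Γ N : Type} (G : CNF Γ N)

-- Lists of length at most two suffice: rules only ask for `KopFill G [C, D]`, and the
-- pieces of a split are no longer than the list split.
abbrev Shape (N : Type) := N ⊕ {l : List N | l.length ≤ 2}

def shapes (t : Term (KLetter Γ)) : Set (Shape N) :=
  {x | Sum.elim (KopFrom G · t) (fun l => KopFill G l t) x}

variable {G}

theorem kopFill_congr {t t' : Term (KLetter Γ)} (h : shapes G t = shapes G t') {l : List N}
    (hl : l.length ≤ 2) : KopFill G l t ↔ KopFill G l t' :=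
  Set.ext_iff.1 h (.inr ⟨l, hl⟩)

theorem kopSplit_congr {t₁ t₂ t₁' t₂' : Term (KLetter Γ)} (h₁ : shapes G t₁ = shapes G t₁')
    (h₂ : shapes G t₂ = shapes G t₂') {l : List N} (hl : l.length ≤ 2) :
    KopSplit G l t₁ t₂ ↔ KopSplit G l t₁' t₂' := by
  refine exists₂_congr fun l₁ l₂ => and_congr_right fun e => ?_
  rw [e, List.length_append] at hl
  exact and_congr (kopFill_congr h₁ (by omega)) (kopFill_congr h₂ (by omega))

theorem shapes_aNode_congr {t₁ t₂ t₁' t₂' : Term (KLetter Γ)} (h₁ : shapes G t₁ = shapes G t₁')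
    (h₂ : shapes G t₂ = shapes G t₂') : shapes G (aNode t₁ t₂) = shapes G (aNode t₁' t₂') := by
  have hfrom : ∀ A, KopFrom G A (aNode t₁ t₂) ↔ KopFrom G A (aNode t₁' t₂') := fun A => by
    simp only [kopFrom_aNode_iff]
    exact exists₂_congr fun C D => and_congr_right fun _ => kopSplit_congr h₁ h₂ (by simp)
  ext (A | ⟨l, hl⟩)
  · exact hfrom A
  · change KopFill G l _ ↔ KopFill G l _
    simp only [kopFill_aNode_iff, hfrom, kopSplit_congr h₁ h₂ hl]

theorem shapes_node_congr {x : KLetter Γ} {ts ts' : List (Term (KLetter Γ))}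
    (hw : (node x ts).WF arK) (hw' : (node x ts').WF arK)
    (h : ts.map (shapes G) = ts'.map (shapes G)) :
    shapes G (node x ts) = shapes G (node x ts') := by
  have hlen := ((wf_node _ _ _).1 hw).1
  have hlen' := ((wf_node _ _ _).1 hw').1
  rcases x with _ | _ | _ <;> simp only [arK] at hlen hlen'
  case inr.true =>
    obtain ⟨t₁, t₂, rfl⟩ := List.length_eq_two.1 hlen
    obtain ⟨t₁', t₂', rfl⟩ := List.length_eq_two.1 hlen'
    simp only [List.map_cons, List.map_nil, List.cons.injEq, and_true] at h
    exact shapes_aNode_congr h.1 h.2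
  all_goals rw [List.length_eq_zero_iff.1 hlen, List.length_eq_zero_iff.1 hlen']

end Shapes

/-- The Kopczyński obfuscation of a CNF grammar is a regular tree language over
`Γ ∪ {a, c}`. -/
theorem kop_regular {Γ N : Type} [Finite N] (G : CNF Γ N) :
    RegularTree arK (kopLang G) := by
  have : Finite {l : List N | l.length ≤ 2} := (List.finite_length_le N 2).to_subtype
  have hL : kopLang G = {u | u.ports = 0 ∧ u.WF arK ∧ shapes G u ∈ {q | .inl G.start ∈ q}} :=
    Set.ext fun u => ⟨fun ⟨d, hd, hk⟩ => ⟨hk.ground.1, hk.ground.2, d, hd, hk⟩, fun h => h.2.2⟩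
  rw [hL]
  exact RegularTree.of_congr arK (shapes G) _ fun _ _ _ hw hw' h => shapes_node_congr hw hw' h
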